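/- arXiv:math/0305059 — 7 statements merged into one kernel-verified Lean document; each statement's English description precedes it below -/
import Mathlib

section
/- Let λ > 0 and let F(x) = 1 - exp(-λx) for x > 0 be the exponential distribution function. Let Q be a PGF and let c ∈ (0,1). Then Q(F(x)) = F(cx) for all x > 0 if and only if Q(s) = 1 - (1-s)^c for all s ∈ [0,1] (i.e., Q is the Sibuya(v) PGF with v = c). In other words, the exponential law is N-max stable if and only if N is Sibuya(v), with c = v. -/
/-- `Q : ℝ → ℝ` is the probability generating function of a positive integer-valued
random variable: `Q s = ∑ pₙ sⁿ` on `[0,1]` with `pₙ ≥ 0`, `p₀ = 0`, `∑ pₙ = 1`. -/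
def IsPGF (Q : ℝ → ℝ) : Prop :=
  ∃ p : ℕ → ℝ, (∀ n, 0 ≤ p n) ∧ p 0 = 0 ∧ (∑' n, p n) = 1 ∧
    ∀ s ∈ Set.Icc (0:ℝ) 1, Q s = ∑' n, p n * s ^ n

/-!
`x ↦ 1 - exp (-λx)` maps `(0, ∞)` onto `(0, 1)`, and with `s = 1 - exp (-λx)` one has
`1 - exp (-λcx) = 1 - (exp (-λx)) ^ c = 1 - (1 - s) ^ c`. So the max-stability equation is exactly
the Sibuya formula on the open interval; at the endpoints both sides agree since every PGF of a
positive random variable has `Q 0 = 0` and `Q 1 = 1`.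
-/

open Set Real

namespace IsPGF

variable {Q : ℝ → ℝ}

theorem apply_zero (hQ : IsPGF Q) : Q 0 = 0 := by
  obtain ⟨p, -, hp0, -, hQp⟩ := hQ
  have hterm : (fun n => p n * (0 : ℝ) ^ n) = fun _ => 0 := by
    funext n
    cases n <;> simp [hp0]
  rw [hQp 0 (left_mem_Icc.2 zero_le_one), hterm, tsum_zero]

theorem apply_one (hQ : IsPGF Q) : Q 1 = 1 := by
  obtain ⟨p, -, -, hsum, hQp⟩ := hQ
  simpa [hQp 1 (right_mem_Icc.2 zero_le_one)] using hsum

theorem eq_sibuya_on_Icc_iff_on_Ioo (hQ : IsPGF Q) {c : ℝ} (hc : 0 < c) :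
    (∀ s ∈ Icc (0 : ℝ) 1, Q s = 1 - (1 - s) ^ c) ↔
      ∀ s ∈ Ioo (0 : ℝ) 1, Q s = 1 - (1 - s) ^ c := by
  refine ⟨fun h s hs ↦ h s (Ioo_subset_Icc_self hs), fun h s hs ↦ ?_⟩
  rcases eq_endpoints_or_mem_Ioo_of_mem_Icc hs with rfl | rfl | hs
  · simp [hQ.apply_zero]
  · simp [hQ.apply_one, zero_rpow hc.ne']
  · exact h s hs

end IsPGF

theorem exists_pos_one_sub_exp_neg_mul_eq {lam : ℝ} (hlam : 0 < lam) {s : ℝ}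
    (hs : s ∈ Ioo (0 : ℝ) 1) : ∃ x, 0 < x ∧ 1 - exp (-(lam * x)) = s := by
  obtain ⟨hs0, hs1⟩ := hs
  refine ⟨-log (1 - s) / lam, div_pos (neg_pos.2 (log_neg (by linarith) (by linarith))) hlam, ?_⟩
  rw [mul_div_cancel₀ _ hlam.ne', neg_neg, exp_log (by linarith)]
  ring

theorem one_sub_exp_neg_mul_mem_Ioo {lam x : ℝ} (hlam : 0 < lam) (hx : 0 < x) :
    1 - exp (-(lam * x)) ∈ Ioo (0 : ℝ) 1 := by
  have hpos := exp_pos (-(lam * x))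
  have hlt : exp (-(lam * x)) < 1 := exp_lt_one_iff.2 (by nlinarith)
  constructor <;> linarith

theorem exp_neg_mul_mul_eq_rpow (lam c x : ℝ) :
    exp (-(lam * (c * x))) = exp (-(lam * x)) ^ c := by
  rw [← exp_mul]
  ring_nf

theorem exponential_max_stable_iff_sibuya_on_Ioo {lam : ℝ} (hlam : 0 < lam) (Q : ℝ → ℝ) (c : ℝ) :
    (∀ x, 0 < x → Q (1 - exp (-(lam * x))) = 1 - exp (-(lam * (c * x)))) ↔
      ∀ s ∈ Ioo (0 : ℝ) 1, Q s = 1 - (1 - s) ^ c := by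
  simp_rw [exp_neg_mul_mul_eq_rpow]
  constructor
  · intro h s hs
    obtain ⟨x, hx, rfl⟩ := exists_pos_one_sub_exp_neg_mul_eq hlam hs
    simpa using h x hx
  · intro h x hx
    simpa using h _ (one_sub_exp_neg_mul_mem_Ioo hlam hx)

/-- The exponential law is N-max stable iff N is Sibuya(v) with v = c. -/
theorem exponential_max_stable_iff_sibuya
    (lam : ℝ) (hlam : 0 < lam) (F Q : ℝ → ℝ)
    (hF : ∀ x : ℝ, 0 < x → F x = 1 - Real.exp (-(lam * x)))
    (hQ : IsPGF Q) (c : ℝ) (hc : c ∈ Set.Ioo (0:ℝ) 1) :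
    (∀ x : ℝ, 0 < x → Q (F x) = F (c * x)) ↔
      (∀ s ∈ Set.Icc (0:ℝ) 1, Q s = 1 - (1 - s) ^ c) := by
  have hstable : (∀ x : ℝ, 0 < x → Q (F x) = F (c * x)) ↔
      ∀ x, 0 < x → Q (1 - exp (-(lam * x))) = 1 - exp (-(lam * (c * x))) :=
    forall₂_congr fun x hx ↦ by rw [hF x hx, hF (c * x) (mul_pos hc.1 hx)]
  rw [hstable, exponential_max_stable_iff_sibuya_on_Ioo hlam, hQ.eq_sibuya_on_Icc_iff_on_Ioo hc.1]
end

section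
/- Let λ > 0 and let F(x) = 1 - exp(-λx) for x > 0 be the exponential distribution function, with survival function R(x) = exp(-λx). Let Q be a PGF and let c ∈ (0,1). Then Q(R(cx)) = R(x) for all x > 0 if and only if there is an integer k ≥ 2 such that c = 1/k and Q(s) = s^k for all s ∈ [0,1] (i.e., N is degenerate at the integer k = 1/c > 1). In other words, the exponential law is N-min stable if and only if N is degenerate at an integer k > 1, with c = 1/k. -/
open Set Filter Topology

theorem summable_mul_pow_of_nonneg {p : ℕ → ℝ} (hp : ∀ n, 0 ≤ p n) (hps : Summable p) {s : ℝ}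
    (hs0 : 0 ≤ s) (hs1 : s ≤ 1) : Summable fun n => p n * s ^ n :=
  hps.of_nonneg_of_le (fun n => mul_nonneg (hp n) (pow_nonneg hs0 n))
    fun n => mul_le_of_le_one_right (hp n) (pow_le_one₀ hs0 hs1)

theorem eq_zero_of_tsum_mul_pow_le_rpow {p : ℕ → ℝ} (hp : ∀ n, 0 ≤ p n) (hps : Summable p)
    {a : ℝ} (h : ∀ s ∈ Ioo (0 : ℝ) 1, ∑' n, p n * s ^ n ≤ s ^ a) {n : ℕ} (hn : (n : ℝ) < a) :
    p n = 0 := by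
  have hbound : ∀ s ∈ Ioo (0 : ℝ) 1, p n ≤ s ^ (a - n) := fun s hs => by
    rw [Real.rpow_sub hs.1, Real.rpow_natCast, le_div_iff₀ (pow_pos hs.1 n)]
    exact ((summable_mul_pow_of_nonneg hp hps hs.1.le hs.2.le).le_tsum n
      fun m _ => mul_nonneg (hp m) (pow_nonneg hs.1.le m)).trans (h s hs)
  have hlim : Tendsto (fun s : ℝ => s ^ (a - n)) (𝓝[>] 0) (𝓝 0) := by
    have := (Real.continuousAt_rpow_const 0 (a - n) (Or.inr (sub_pos.2 hn).le)).tendsto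
    rw [Real.zero_rpow (sub_pos.2 hn).ne'] at this
    exact this.mono_left nhdsWithin_le_nhds
  have hp_nonpos : p n ≤ 0 := ge_of_tendsto hlim <| by
    filter_upwards [Ioo_mem_nhdsGT one_pos] with s hs using hbound s hs
  exact hp_nonpos.antisymm (hp n)

theorem eq_natCeil_of_tsum_mul_pow_eq_rpow {p : ℕ → ℝ} (hp : ∀ n, 0 ≤ p n) (hps : Summable p)
    (hp1 : ∑' n, p n = 1) {a : ℝ} (h : ∀ s ∈ Ioo (0 : ℝ) 1, ∑' n, p n * s ^ n = s ^ a) :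
    a = ⌈a⌉₊ := by
  refine (Nat.le_ceil a).antisymm ?_
  have hhalf : (1 / 2 : ℝ) ∈ Ioo 0 1 := by norm_num
  have hterm : ∀ n, p n * (1 / 2 : ℝ) ^ n ≤ p n * (1 / 2 : ℝ) ^ ⌈a⌉₊ := fun n => by
    rcases lt_or_ge (n : ℝ) a with hna | hna
    · simp [eq_zero_of_tsum_mul_pow_le_rpow hp hps (fun s hs => (h s hs).le) hna]
    · exact mul_le_mul_of_nonneg_left
        (pow_le_pow_of_le_one (by norm_num) (by norm_num) (Nat.ceil_le.2 hna)) (hp n)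
  have hle : (1 / 2 : ℝ) ^ a ≤ (1 / 2 : ℝ) ^ (⌈a⌉₊ : ℝ) :=
    calc (1 / 2 : ℝ) ^ a = ∑' n, p n * (1 / 2 : ℝ) ^ n := (h _ hhalf).symm
      _ ≤ ∑' n, p n * (1 / 2 : ℝ) ^ ⌈a⌉₊ :=
        (summable_mul_pow_of_nonneg hp hps hhalf.1.le hhalf.2.le).tsum_le_tsum hterm
          (hps.mul_right _)
      _ = (1 / 2 : ℝ) ^ (⌈a⌉₊ : ℝ) := by rw [tsum_mul_right, hp1, one_mul, Real.rpow_natCast]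
  exact (Real.rpow_le_rpow_left_iff_of_base_lt_one hhalf.1 hhalf.2).1 hle

theorem IsPGF.exists_nat_eq_pow_of_eq_rpow {Q : ℝ → ℝ} (hQ : IsPGF Q) {a : ℝ} (ha : 0 < a)
    (h : ∀ s ∈ Ioo (0 : ℝ) 1, Q s = s ^ a) :
    ∃ k : ℕ, a = k ∧ ∀ s ∈ Icc (0 : ℝ) 1, Q s = s ^ k := by
  obtain ⟨p, hp, hp0, hp1, hQp⟩ := hQ
  have hps : Summable p := by
    by_contra hns
    rw [tsum_eq_zero_of_not_summable hns] at hp1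
    exact zero_ne_one hp1
  have hak := eq_natCeil_of_tsum_mul_pow_eq_rpow hp hps hp1 fun s hs =>
    (hQp s (Ioo_subset_Icc_self hs)).symm.trans (h s hs)
  have hk0 : ⌈a⌉₊ ≠ 0 := by positivity
  refine ⟨⌈a⌉₊, hak, fun s hs => ?_⟩
  obtain rfl | hs0 := hs.1.eq_or_lt
  · rw [hQp 0 (left_mem_Icc.2 zero_le_one), tsum_eq_single 0 fun n hn => by simp [hn]]
    simp [hp0, hk0]
  obtain rfl | hs1 := hs.2.eq_or_lt
  · simp [hQp 1 (right_mem_Icc.2 zero_le_one), hp1]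
  · rw [h s ⟨hs0, hs1⟩, ← Real.rpow_natCast, ← hak]

theorem exp_min_stable_iff_eq_rpow {lam c : ℝ} (hlam : 0 < lam) (hc : 0 < c) {R Q : ℝ → ℝ}
    (hR : ∀ x : ℝ, 0 < x → R x = Real.exp (-(lam * x))) :
    (∀ x : ℝ, 0 < x → Q (R (c * x)) = R x) ↔ ∀ s ∈ Ioo (0 : ℝ) 1, Q s = s ^ (1 / c) := by
  have hpow : ∀ x, Real.exp (-(lam * (c * x))) ^ (1 / c) = Real.exp (-(lam * x)) := fun x => by
    rw [← Real.exp_mul]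
    field_simp
  constructor
  · intro h s hs
    set x := -Real.log s / (lam * c)
    have hx : 0 < x := div_pos (neg_pos.2 (Real.log_neg hs.1 hs.2)) (mul_pos hlam hc)
    have hs_eq : Real.exp (-(lam * (c * x))) = s := by
      rw [← Real.exp_log hs.1]
      congr 1
      simp only [x]
      field_simp
    have hstable := h x hx
    rw [hR _ (mul_pos hc hx), hR x hx, hs_eq] at hstable
    rw [hstable, ← hs_eq, hpow]
  · intro h x hx
    have hRcx : R (c * x) ∈ Ioo (0 : ℝ) 1 := by
      rw [hR _ (mul_pos hc hx)]
      exact ⟨Real.exp_pos _, Real.exp_lt_one_iff.2 (neg_neg_of_pos (by positivity))⟩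
    rw [h _ hRcx, hR _ (mul_pos hc hx), hR x hx, hpow]

theorem exponential_min_stable_iff_degenerate_general
    (lam : ℝ) (hlam : 0 < lam) (R Q : ℝ → ℝ)
    (hR : ∀ x : ℝ, 0 < x → R x = Real.exp (-(lam * x)))
    (hQ : IsPGF Q) (c : ℝ) (hc : c ∈ Set.Ioo (0:ℝ) 1) :
    (∀ x : ℝ, 0 < x → Q (R (c * x)) = R x) ↔
      (∃ k : ℕ, 2 ≤ k ∧ c = 1 / (k : ℝ) ∧ ∀ s ∈ Set.Icc (0:ℝ) 1, Q s = s ^ k) := by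
  rw [exp_min_stable_iff_eq_rpow hlam hc.1 hR]
  constructor
  · intro h
    obtain ⟨k, hck, hQk⟩ := hQ.exists_nat_eq_pow_of_eq_rpow (one_div_pos.2 hc.1) h
    have hk : (1 : ℝ) < k := hck ▸ (one_lt_div hc.1).2 hc.2
    exact ⟨k, by exact_mod_cast hk, by rw [← hck, one_div_one_div], hQk⟩
  · rintro ⟨k, -, rfl, hQk⟩ s hs
    rw [hQk s (Ioo_subset_Icc_self hs), one_div_one_div, Real.rpow_natCast]

/-- The exponential law is N-min stable iff N is degenerate at an integer k > 1, with c = 1/k. -/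
theorem exponential_min_stable_iff_degenerate
    (lam : ℝ) (hlam : 0 < lam) (F R Q : ℝ → ℝ)
    (hF : ∀ x : ℝ, 0 < x → F x = 1 - Real.exp (-(lam * x)))
    (hR : ∀ x : ℝ, 0 < x → R x = Real.exp (-(lam * x)))
    (hQ : IsPGF Q) (c : ℝ) (hc : c ∈ Set.Ioo (0:ℝ) 1) :
    (∀ x : ℝ, 0 < x → Q (R (c * x)) = R x) ↔
      (∃ k : ℕ, 2 ≤ k ∧ c = 1 / (k : ℝ) ∧ ∀ s ∈ Set.Icc (0:ℝ) 1, Q s = s ^ k) :=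
  exponential_min_stable_iff_degenerate_general lam hlam R Q hR hQ c hc
end

section
/- Let a > 1, let k be a positive integer, let Q(s) = s / (a - (a-1)s^k)^{1/k} be the Harris(a,k) PGF, and let c ∈ (0,1). Let F : (0,∞) → ℝ satisfy 0 < 1 - F(x) ≤ 1 for all x > 0, set R = 1 - F and ψ(x) = R(x)^{-k} - 1 (so that F(x) = 1 - (1 + ψ(x))^{-1/k}). Then Q(R(cx)) = R(x) for all x > 0 if and only if ψ(cx) = (1/a)·ψ(x) for all x > 0; that is, F is Harris(a,k)-min stable with constant c if and only if F is generalized semi-Pareto(p,α,β) with p = 1/a = c^α and β = 1/k. -/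
/-!
Write `r = R x`, `s = R (c x)`, both in `(0, 1]`. The min-stability equation
`s / (a - (a-1) s^k)^(1/k) = r` is, after raising to the `k`-th power, the relation
`s^k = r^k (a - (a-1) s^k)`, which is linear in `s^k` and rearranges to
`s^{-k} - 1 = (r^{-k} - 1) / a`, i.e. `ψ (c x) = ψ x / a`.
-/

noncomputable def harrisPGF (a : ℝ) (k : ℕ) (s : ℝ) : ℝ :=
  s / (a - (a - 1) * s ^ k) ^ ((1 : ℝ) / k)

lemma harris_denom_pos {a s : ℝ} (ha : 0 < a) (hs : 0 ≤ s) (hs1 : s ≤ 1) (k : ℕ) :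
    0 < a - (a - 1) * s ^ k := by
  have h0 : 0 ≤ s ^ k := pow_nonneg hs k
  have h1 : s ^ k ≤ 1 := pow_le_one₀ hs hs1
  rcases h0.eq_or_lt with h | h
  · rw [← h]; simpa using ha
  · nlinarith

lemma div_rpow_one_div_eq_iff_pow_eq {D r s : ℝ} {k : ℕ} (hk : k ≠ 0) (hD : 0 < D)
    (hr : 0 ≤ r) (hs : 0 ≤ s) :
    s / D ^ ((1 : ℝ) / k) = r ↔ s ^ k = r ^ k * D := by
  have hroot : 0 < D ^ ((1 : ℝ) / k) := Real.rpow_pos_of_pos hD _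
  have hroot_pow : (D ^ ((1 : ℝ) / k)) ^ k = D := by
    rw [← Real.rpow_natCast, ← Real.rpow_mul hD.le, one_div_mul_cancel (by exact_mod_cast hk),
      Real.rpow_one]
  rw [div_eq_iff hroot.ne', ← pow_left_inj₀ hs (mul_nonneg hr hroot.le) hk, mul_pow, hroot_pow]

lemma eq_mul_harris_denom_iff {a u v : ℝ} (ha : a ≠ 0) (hu : 0 < u) (hv : 0 < v) :
    v = u * (a - (a - 1) * v) ↔ v⁻¹ - 1 = 1 / a * (u⁻¹ - 1) := by
  field_simp
  constructor <;> intro h <;> linarith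

theorem harrisPGF_eq_iff {a r s : ℝ} {k : ℕ} (ha : 0 < a) (hk : k ≠ 0) (hr : 0 < r)
    (hs : 0 < s) (hs1 : s ≤ 1) :
    harrisPGF a k s = r ↔ s ^ (-(k : ℝ)) - 1 = 1 / a * (r ^ (-(k : ℝ)) - 1) := by
  rw [harrisPGF, div_rpow_one_div_eq_iff_pow_eq hk (harris_denom_pos ha hs.le hs1 k) hr.le hs.le,
    eq_mul_harris_denom_iff ha.ne' (pow_pos hr k) (pow_pos hs k), Real.rpow_neg hs.le,
    Real.rpow_neg hr.le, Real.rpow_natCast, Real.rpow_natCast]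

/-- F is Harris(a,k)-min stable with constant c iff F is generalized
semi-Pareto, i.e. iff ψ(cx) = (1/a)·ψ(x) for all x > 0, where
ψ(x) = R(x)^{-k} - 1 and R = 1 - F. -/
theorem harris_min_stable_iff_genSemiPareto
    (a : ℝ) (ha : 1 < a) (k : ℕ) (hk : 0 < k) (c : ℝ) (hc : c ∈ Set.Ioo (0:ℝ) 1)
    (Q F R ψ : ℝ → ℝ)
    (hQ : ∀ s : ℝ, Q s = s / (a - (a - 1) * s ^ k) ^ ((1:ℝ) / k))
    (hF : ∀ x : ℝ, 0 < x → 0 < 1 - F x ∧ 1 - F x ≤ 1)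
    (hR : ∀ x : ℝ, 0 < x → R x = 1 - F x)
    (hψ : ∀ x : ℝ, 0 < x → ψ x = (R x) ^ (-(k:ℝ)) - 1) :
    (∀ x : ℝ, 0 < x → Q (R (c * x)) = R x) ↔
      (∀ x : ℝ, 0 < x → ψ (c * x) = (1 / a) * ψ x) := by
  have hR_mem : ∀ x, 0 < x → 0 < R x ∧ R x ≤ 1 := fun x hx => hR x hx ▸ hF x hx
  refine forall₂_congr fun x hx => ?_
  have hcx : 0 < c * x := mul_pos hc.1 hx
  rw [hQ, hψ _ hcx, hψ x hx]
  exact harrisPGF_eq_iff (by linarith) hk.ne' (hR_mem x hx).1 (hR_mem _ hcx).1 (hR_mem _ hcx).2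
end

section
/- Let 0 < p < 1, α > 0, and set c = p^{1/α}. Let ψ : (0,∞) → (0,∞) be continuous, strictly increasing, and surjective onto (0,∞), with ψ(c·x) = p·ψ(x) for all x > 0. Define the semi-Weibull(p,α) distribution function F(x) = 1 - exp(-ψ(x)). Then a PGF Q satisfies Q(F(x)) = F(cx) for all x > 0 if and only if Q(s) = 1 - (1-s)^p for all s ∈ [0,1], i.e., the semi-Weibull(p,α) law is N-max stable (with c^α = p) if and only if N is Sibuya(p). -/
/-- The semi-Weibull(p,α) law is N-max stable (with c^α = p) iff N is Sibuya(p). -/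
theorem semiWeibull_max_stable_iff_sibuya
    (p α : ℝ) (hp : p ∈ Set.Ioo (0:ℝ) 1) (hα : 0 < α)
    (c : ℝ) (hc : c = p ^ (1 / α))
    (ψ F : ℝ → ℝ)
    (hcont : ContinuousOn ψ (Set.Ioi 0))
    (hmono : StrictMonoOn ψ (Set.Ioi 0))
    (hsurj : ψ '' (Set.Ioi 0) = Set.Ioi 0)
    (hscale : ∀ x : ℝ, 0 < x → ψ (c * x) = p * ψ x)
    (hFdef : ∀ x : ℝ, 0 < x → F x = 1 - Real.exp (-ψ x))
    (Q : ℝ → ℝ) (hQ : IsPGF Q) :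
    (∀ x : ℝ, 0 < x → Q (F x) = F (c * x)) ↔
      (∀ s ∈ Set.Icc (0:ℝ) 1, Q s = 1 - (1 - s) ^ p) := by
  obtain ⟨hp0, hp1⟩ := hp
  have hc0 : 0 < c := hc ▸ Real.rpow_pos_of_pos hp0 _
  have hψpos : ∀ x : ℝ, 0 < x → 0 < ψ x := by
    intro x hx
    have : ψ x ∈ ψ '' Set.Ioi 0 := ⟨x, hx, rfl⟩
    rw [hsurj] at this
    exact this
  obtain ⟨q, hq0, hq00, hqsum, hqQ⟩ := hQ
  constructor
  · intro h s hs
    rcases eq_or_lt_of_le hs.1 with h0 | h0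
    · -- s = 0
      rw [hqQ s hs, ← h0]
      have h1 : (∑' n, q n * (0:ℝ) ^ n) = q 0 := by
        rw [tsum_eq_single 0]
        · simp
        · intro n hn; simp [zero_pow hn]
      rw [h1, hq00]
      simp
    · rcases eq_or_lt_of_le hs.2 with h1 | h1
      · -- s = 1
        rw [hqQ s hs, h1]
        simp [hqsum, Real.zero_rpow (ne_of_gt hp0)]
      · -- 0 < s < 1
        have h1s : 0 < 1 - s := by linarith
        set t := -Real.log (1 - s) with ht_def
        have ht : 0 < t := by
          have := Real.log_neg h1s (by linarith)
          simp only [ht_def]; linarith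
        obtain ⟨x, hx, hψx⟩ : ∃ x ∈ Set.Ioi (0:ℝ), ψ x = t := by
          have : t ∈ Set.Ioi (0:ℝ) := ht
          rw [← hsurj] at this
          exact this
        have hx' : (0:ℝ) < x := hx
        have hexp : Real.exp (-t) = 1 - s := by
          rw [ht_def, neg_neg, Real.exp_log h1s]
        have hFx : F x = s := by
          rw [hFdef x hx', hψx, hexp]; ring
        have hcx : (0:ℝ) < c * x := mul_pos hc0 hx'
        have := h x hx'
        rw [hFx, hFdef (c * x) hcx, hscale x hx', hψx] at this
        rw [this]
        congr 1
        rw [Real.rpow_def_of_pos h1s, ← Real.exp_log h1s]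
        rw [Real.log_exp]
        congr 1
        rw [ht_def]; ring
  · intro h x hx
    have hψ := hψpos x hx
    have hexp1 : Real.exp (-ψ x) < 1 := by
      rw [Real.exp_lt_one_iff]; linarith
    have hFx : F x = 1 - Real.exp (-ψ x) := hFdef x hx
    have hFmem : F x ∈ Set.Icc (0:ℝ) 1 := by
      rw [hFx]
      constructor
      · linarith
      · have := Real.exp_pos (-ψ x); linarith
    have hcx : (0:ℝ) < c * x := mul_pos hc0 hx
    rw [h (F x) hFmem, hFx, hFdef (c * x) hcx, hscale x hx]
    have : (1 - (1 - Real.exp (-ψ x))) = Real.exp (-ψ x) := by ring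
    rw [this, ← Real.exp_log (Real.exp_pos (-ψ x)) ]
    rw [Real.log_exp, ← Real.exp_log (Real.exp_pos (-ψ x))]
    rw [Real.log_exp, Real.rpow_def_of_pos (Real.exp_pos _), Real.log_exp]
    congr 2
    ring
end

section
/- Let 0 < p < 1, α > 0, and set c = p^{1/α}. Let ψ : (0,∞) → (0,∞) be continuous, strictly increasing, and surjective onto (0,∞), with ψ(c·x) = p·ψ(x) for all x > 0. Define F(x) = 1 - exp(-ψ(x)) and R(x) = exp(-ψ(x)). Then there exists a PGF Q with Q(R(cx)) = R(x) for all x > 0 if and only if 1/p is an integer k ≥ 2; and in that case the only such Q is Q(s) = s^{1/p}. In other words, the semi-Weibull(p,α) law is N-min stable (with c^α = p) if and only if N is degenerate at the integer 1/p > 1. -/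
/-- If a nonnegative series with zero constant term and total mass 1 represents `s ^ m`
on `(0,1)` for some real `m > 1`, then `m` is an integer `k ≥ 2`. -/
lemma aux_pgf_rpow (m : ℝ) (hm : 1 < m) (p' : ℕ → ℝ)
    (hnn : ∀ n, 0 ≤ p' n) (h0 : p' 0 = 0) (hsum : (∑' n, p' n) = 1)
    (heq : ∀ s ∈ Set.Ioo (0:ℝ) 1, (∑' n, p' n * s ^ n) = s ^ m) :
    ∃ k : ℕ, 2 ≤ k ∧ m = k := by
  have hS : Summable p' := by
    by_contra h
    rw [tsum_eq_zero_of_not_summable h] at hsum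
    norm_num at hsum
  have hex : ∃ n, p' n ≠ 0 := by
    by_contra h
    push_neg at h
    have : (∑' n, p' n) = 0 := by simp [h]
    rw [this] at hsum; norm_num at hsum
  set n₀ := Nat.find hex with hn₀
  set q := p' n₀ with hqdef
  have hq : 0 < q := lt_of_le_of_ne (hnn n₀) (Ne.symm (Nat.find_spec hex))
  have hqle : q ≤ 1 := by
    have := Summable.le_tsum hS n₀ (fun j _ => hnn j)
    rwa [hsum] at this
  have hmin : ∀ n < n₀, p' n = 0 := by
    intro n hn
    have := Nat.find_min hex hn
    simpa using this
  -- main estimate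
  have hEst : ∀ s ∈ Set.Ioo (0:ℝ) 1,
      q ≤ s ^ (m - (n₀:ℝ)) ∧ s ^ (m - (n₀:ℝ)) ≤ q + s := by
    intro s hs
    obtain ⟨hs0, hs1⟩ := hs
    have hterm_nn : ∀ n, 0 ≤ p' n * s ^ n :=
      fun n => mul_nonneg (hnn n) (pow_nonneg hs0.le n)
    have hSs : Summable (fun n => p' n * s ^ n) :=
      hS.of_nonneg_of_le hterm_nn
        (fun n => mul_le_of_le_one_right (hnn n) (pow_le_one₀ hs0.le hs1.le))
    have hrepr := heq s ⟨hs0, hs1⟩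
    -- lower bound
    have hlow : q * s ^ n₀ ≤ s ^ m := by
      have := Summable.le_tsum hSs n₀ (fun j _ => hterm_nn j)
      rwa [hrepr] at this
    -- upper bound
    have hup : s ^ m ≤ q * s ^ n₀ + s ^ (n₀ + 1) := by
      have hsplit := Summable.tsum_eq_add_tsum_ite hSs n₀
      have hT : (∑' n, if n = n₀ then 0 else p' n * s ^ n) ≤ s ^ (n₀ + 1) := by
        have hle : ∀ n, (if n = n₀ then 0 else p' n * s ^ n) ≤ p' n * s ^ (n₀ + 1) := by
          intro n
          by_cases hn : n = n₀
          · simp [hn, mul_nonneg (hnn n₀) (pow_nonneg hs0.le _)]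
          · simp only [hn, if_false]
            rcases lt_or_ge n n₀ with h | h
            · simp [hmin n h]
            · have hn' : n₀ + 1 ≤ n := lt_of_le_of_ne h (Ne.symm hn)
              exact mul_le_mul_of_nonneg_left
                (pow_le_pow_of_le_one hs0.le hs1.le hn') (hnn n)
        have hsum2 : Summable (fun n => p' n * s ^ (n₀ + 1)) := hS.mul_right _
        have hsum1 : Summable (fun n => if n = n₀ then 0 else p' n * s ^ n) := by
          apply hS.of_nonneg_of_le
          · intro n; by_cases hn : n = n₀ <;> simp [hn, hterm_nn n]
          · intro n; by_cases hn : n = n₀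
            · simp [hn, hnn n₀]
            · simp only [hn, if_false]
              exact mul_le_of_le_one_right (hnn n) (pow_le_one₀ hs0.le hs1.le)
        calc (∑' n, if n = n₀ then 0 else p' n * s ^ n)
            ≤ ∑' n, p' n * s ^ (n₀ + 1) := Summable.tsum_le_tsum hle hsum1 hsum2
          _ = (∑' n, p' n) * s ^ (n₀ + 1) := tsum_mul_right
          _ = s ^ (n₀ + 1) := by rw [hsum, one_mul]
      calc s ^ m = q * s ^ n₀ + ∑' n, if n = n₀ then 0 else p' n * s ^ n := by
            rw [← hrepr, hsplit]
        _ ≤ q * s ^ n₀ + s ^ (n₀ + 1) := by linarith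
    -- divide by s ^ n₀
    have hpow_pos : (0:ℝ) < s ^ n₀ := pow_pos hs0 n₀
    have hsm : s ^ m = s ^ (m - (n₀:ℝ)) * s ^ n₀ := by
      rw [← Real.rpow_natCast s n₀, ← Real.rpow_add hs0, sub_add_cancel]
    constructor
    · have : q * s ^ n₀ ≤ s ^ (m - (n₀:ℝ)) * s ^ n₀ := by rw [← hsm]; exact hlow
      exact le_of_mul_le_mul_right this hpow_pos
    · have : s ^ (m - (n₀:ℝ)) * s ^ n₀ ≤ (q + s) * s ^ n₀ := by
        rw [← hsm, add_mul]
        have : s * s ^ n₀ = s ^ (n₀ + 1) := by ring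
        rw [this]; exact hup
      exact le_of_mul_le_mul_right this hpow_pos
  -- deduce m = n₀
  have hd : m - (n₀:ℝ) = 0 := by
    by_contra hd
    rcases lt_or_gt_of_ne hd with hneg | hpos
    · -- m < n₀ : pick s with s ^ (m - n₀) = q + 2
      set s := (q + 2) ^ (m - (n₀:ℝ))⁻¹ with hsdef
      have h1q : (1:ℝ) < q + 2 := by linarith
      have hs0 : 0 < s := Real.rpow_pos_of_pos (by linarith) _
      have hs1 : s < 1 :=
        Real.rpow_lt_one_of_one_lt_of_neg h1q (inv_neg''.2 hneg)
      have hsd : s ^ (m - (n₀:ℝ)) = q + 2 := by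
        rw [hsdef, ← Real.rpow_mul (by linarith : (0:ℝ) ≤ q + 2),
          inv_mul_cancel₀ hd, Real.rpow_one]
      have := (hEst s ⟨hs0, hs1⟩).2
      rw [hsd] at this
      linarith
    · -- m > n₀ : pick s with s ^ (m - n₀) = q / 2
      set s := (q / 2) ^ (m - (n₀:ℝ))⁻¹ with hsdef
      have hq2 : (0:ℝ) < q / 2 := by linarith
      have hs0 : 0 < s := Real.rpow_pos_of_pos hq2 _
      have hs1 : s < 1 := Real.rpow_lt_one hq2.le (by linarith) (inv_pos.2 hpos)
      have hsd : s ^ (m - (n₀:ℝ)) = q / 2 := by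
        rw [hsdef, ← Real.rpow_mul hq2.le, inv_mul_cancel₀ hd, Real.rpow_one]
      have := (hEst s ⟨hs0, hs1⟩).1
      rw [hsd] at this
      linarith
  have hmn : m = (n₀:ℝ) := by linarith
  have hn2 : 2 ≤ n₀ := by
    by_contra h
    push_neg at h
    interval_cases n₀
    · exact hq.ne' (by simpa [hqdef] using h0)
    · rw [hmn] at hm; norm_num at hm
  exact ⟨n₀, hn2, hmn⟩

/-- The semi-Weibull(p,α) law is N-min stable (with c^α = p) iff N is degenerate at
the integer 1/p > 1; and Q(s) = s^{1/p} is the only PGF achieving the stability. -/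
theorem semiWeibull_min_stable_iff_degenerate
    (p α : ℝ) (hp : p ∈ Set.Ioo (0:ℝ) 1) (hα : 0 < α)
    (c : ℝ) (hc : c = p ^ (1 / α))
    (ψ F R : ℝ → ℝ)
    (hcont : ContinuousOn ψ (Set.Ioi 0))
    (hmono : StrictMonoOn ψ (Set.Ioi 0))
    (hsurj : ψ '' (Set.Ioi 0) = Set.Ioi 0)
    (hscale : ∀ x : ℝ, 0 < x → ψ (c * x) = p * ψ x)
    (hFdef : ∀ x : ℝ, 0 < x → F x = 1 - Real.exp (-ψ x))
    (hRdef : ∀ x : ℝ, 0 < x → R x = Real.exp (-ψ x)) :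
    ((∃ Q : ℝ → ℝ, IsPGF Q ∧ ∀ x : ℝ, 0 < x → Q (R (c * x)) = R x) ↔
        ∃ k : ℕ, 2 ≤ k ∧ (1 / p : ℝ) = k) ∧
    (∀ Q : ℝ → ℝ, IsPGF Q → (∀ x : ℝ, 0 < x → Q (R (c * x)) = R x) →
        ∀ s ∈ Set.Icc (0:ℝ) 1, Q s = s ^ (1 / p)) := by
  obtain ⟨hp0, hp1⟩ := hp
  have hc0 : 0 < c := hc ▸ Real.rpow_pos_of_pos hp0 _
  -- key: any Q satisfying the stability equation agrees with s ^ (1/p) on (0,1)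
  have hkey : ∀ Q : ℝ → ℝ, (∀ x : ℝ, 0 < x → Q (R (c * x)) = R x) →
      ∀ s ∈ Set.Ioo (0:ℝ) 1, Q s = s ^ (1 / p) := by
    intro Q hQ s hs
    have hlog : Real.log s < 0 := Real.log_neg hs.1 hs.2
    set t := -Real.log s / p with htdef
    have ht0 : 0 < t := div_pos (neg_pos.2 hlog) hp0
    have : t ∈ ψ '' Set.Ioi 0 := by rw [hsurj]; exact ht0
    obtain ⟨x, hx0, hxt⟩ := this
    have hx0' : (0:ℝ) < x := hx0
    have hRcx : R (c * x) = s := by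
      rw [hRdef _ (mul_pos hc0 hx0'), hscale _ hx0', hxt, htdef]
      have hpt : -(p * (-Real.log s / p)) = Real.log s := by
        field_simp
      rw [hpt, Real.exp_log hs.1]
    have hRx : R x = s ^ (1 / p) := by
      rw [hRdef _ hx0', hxt, htdef, Real.rpow_def_of_pos hs.1]
      congr 1
      field_simp
    calc Q s = Q (R (c * x)) := by rw [hRcx]
      _ = R x := hQ x hx0'
      _ = s ^ (1 / p) := hRx
  have hm : (1:ℝ) < 1 / p := one_lt_one_div hp0 hp1
  constructor
  · constructor
    · rintro ⟨Q, ⟨p', hnn, h0, hsum, hrepr⟩, hstab⟩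
      apply aux_pgf_rpow (1 / p) hm p' hnn h0 hsum
      intro s hs
      rw [← hrepr s ⟨hs.1.le, hs.2.le⟩]
      exact hkey Q hstab s hs
    · rintro ⟨k, hk2, hkp⟩
      have hpk : p * k = 1 := by
        field_simp at hkp
        linarith [hkp]
      refine ⟨fun s => s ^ k, ⟨fun n => if n = k then 1 else 0, ?_, ?_, ?_, ?_⟩, ?_⟩
      · intro n; by_cases h : n = k <;> simp [h]
      · have : (0:ℕ) ≠ k := by omega
        simp [this]
      · exact tsum_ite_eq k 1
      · intro s _
        have : (fun n => (if n = k then (1:ℝ) else 0) * s ^ n)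
            = fun n => if n = k then s ^ k else 0 := by
          funext n
          by_cases h : n = k <;> simp [h]
        rw [this]; exact (tsum_ite_eq k (fun _ => s ^ k)).symm
      · intro x hx
        have hcx : 0 < c * x := mul_pos hc0 hx
        rw [hRdef _ hcx, hRdef _ hx, hscale _ hx]
        show Real.exp (-(p * ψ x)) ^ k = Real.exp (-ψ x)
        rw [← Real.exp_nat_mul]
        congr 1
        have : (k:ℝ) * -(p * ψ x) = -((p * k) * ψ x) := by ring
        rw [this, hpk, one_mul]
  · rintro Q ⟨p', hnn, h0, hsum, hrepr⟩ hstab s hs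
    rcases eq_or_lt_of_le hs.1 with h0s | h0s
    · -- s = 0
      rw [← h0s]
      have hz : (fun n => p' n * (0:ℝ) ^ n) = fun _ => (0:ℝ) := by
        funext n
        cases n with
        | zero => simp [h0]
        | succ k => simp
      rw [hrepr 0 ⟨le_refl 0, zero_le_one⟩, hz, tsum_zero,
        Real.zero_rpow (one_div_ne_zero hp0.ne')]
    rcases eq_or_lt_of_le hs.2 with h1s | h1s
    · -- s = 1
      rw [h1s]
      rw [hrepr 1 ⟨zero_le_one, le_refl 1⟩]
      simp [hsum]
    · exact hkey Q hstab s ⟨h0s, h1s⟩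
end

section
/- Let α > 0, let k be a positive integer, let c ∈ (0,1), and let F(x) = (1 + x^{-α})^{-1/k} for x > 0 be the extended log-logistic distribution function of Voorn. Then a PGF Q satisfies Q(F(x)) = F(cx) for all x > 0 if and only if Q is the Harris(a,k) PGF with a = c^{-α}, i.e., Q(s) = s / (c^{-α} - (c^{-α}-1)s^k)^{1/k} for all s ∈ [0,1]. In other words, the extended log-logistic law is N-max stable if and only if N is Harris(c^{-α}, k). -/
/-- The extended log-logistic law of Voorn, F(x) = (1 + x^{-α})^{-1/k}, is
N-max stable iff N is Harris(c^{-α}, k). -/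
theorem extLogLogistic_max_stable_iff_harris
    (α : ℝ) (hα : 0 < α) (k : ℕ) (hk : 0 < k) (c : ℝ) (hc : c ∈ Set.Ioo (0:ℝ) 1)
    (F : ℝ → ℝ)
    (hF : ∀ x : ℝ, 0 < x → F x = (1 + x ^ (-α)) ^ (-(1 / (k:ℝ))))
    (Q : ℝ → ℝ) (hQ : IsPGF Q) :
    (∀ x : ℝ, 0 < x → Q (F x) = F (c * x)) ↔
      (∀ s ∈ Set.Icc (0:ℝ) 1,
        Q s = s / (c ^ (-α) - (c ^ (-α) - 1) * s ^ k) ^ ((1:ℝ) / k)) := by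
  obtain ⟨hc0, hc1⟩ := hc
  have hkR : (0:ℝ) < k := by exact_mod_cast hk
  have hA1 : 1 < c ^ (-α) := by
    rw [Real.one_lt_rpow_iff_of_pos hc0]
    exact Or.inr ⟨hc1, by linarith⟩
  set A := c ^ (-α) with hA
  -- key computation
  have key : ∀ x : ℝ, 0 < x →
      (1 + x ^ (-α)) ^ (-(1 / (k:ℝ))) /
        (A - (A - 1) * ((1 + x ^ (-α)) ^ (-(1 / (k:ℝ)))) ^ k) ^ ((1:ℝ)/k)
        = (1 + (c*x) ^ (-α)) ^ (-(1 / (k:ℝ))) := by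
    intro x hx
    have hxα : 0 < x ^ (-α) := Real.rpow_pos_of_pos hx _
    set u := 1 + x ^ (-α) with hu
    have hu1 : 1 < u := by simp [hu]; linarith
    have hu0 : 0 < u := by linarith
    have hexp : -(1/(k:ℝ)) * k = -1 := by field_simp
    have hsk : (u ^ (-(1/(k:ℝ)))) ^ k = u⁻¹ := by
      rw [← Real.rpow_natCast (u ^ (-(1/(k:ℝ)))) k, ← Real.rpow_mul hu0.le, hexp,
        Real.rpow_neg_one]
    set v := A * u - A + 1 with hv
    have hv1 : 1 < v := by nlinarith
    have hv0 : 0 < v := by linarith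
    have hcx : 1 + (c*x) ^ (-α) = v := by
      rw [Real.mul_rpow hc0.le hx.le, hv, hu, ← hA]; ring
    have hden : A - (A - 1) * u⁻¹ = v / u := by
      field_simp [hv]; ring
    rw [hsk, hden, Real.div_rpow hv0.le hu0.le, hcx]
    rw [div_div_eq_mul_div, Real.rpow_neg hu0.le, Real.rpow_neg hv0.le]
    rw [inv_mul_cancel₀ (by positivity : (u:ℝ) ^ ((1:ℝ)/k) ≠ 0)]
    simp [one_div]
  constructor
  · intro h s hs
    obtain ⟨hs0, hs1⟩ := hs
    obtain ⟨p, hp0, hp00, hpsum, hpQ⟩ := hQ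
    rcases eq_or_lt_of_le hs0 with hz | hs0
    · -- s = 0
      have hQ0 : Q 0 = 0 := by
        rw [hpQ 0 ⟨le_refl _, zero_le_one⟩]
        rw [tsum_eq_single 0 (by intro n hn; simp [zero_pow hn])]
        simp [hp00]
      rw [← hz, hQ0, zero_div]
    rcases eq_or_lt_of_le hs1 with ho | hs1
    · -- s = 1
      have hQ1 : Q 1 = 1 := by
        rw [hpQ 1 ⟨zero_le_one, le_refl _⟩]
        simpa using hpsum
      rw [ho, hQ1, one_pow]
      have : A - (A - 1) * 1 = 1 := by ring
      rw [this, Real.one_rpow, div_one]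
    · -- 0 < s < 1
      have hsk1 : 1 < s ^ (-(k:ℝ)) := by
        rw [Real.one_lt_rpow_iff_of_pos hs0]
        exact Or.inr ⟨hs1, by linarith⟩
      set t := s ^ (-(k:ℝ)) - 1 with ht
      have ht0 : 0 < t := by linarith
      set x := t ^ (-(1/α)) with hx
      have hx0 : 0 < x := Real.rpow_pos_of_pos ht0 _
      have hxt : x ^ (-α) = t := by
        rw [hx, ← Real.rpow_mul ht0.le]
        have : -(1/α) * -α = 1 := by field_simp
        rw [this, Real.rpow_one]
      have hFx : F x = s := by
        rw [hF x hx0, hxt]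
        have : (1:ℝ) + t = s ^ (-(k:ℝ)) := by rw [ht]; ring
        rw [this, ← Real.rpow_mul hs0.le]
        have : -(k:ℝ) * -(1/(k:ℝ)) = 1 := by field_simp
        rw [this, Real.rpow_one]
      have hs' : (1 + x ^ (-α)) ^ (-(1 / (k:ℝ))) = s := by rw [← hF x hx0, hFx]
      have h1 := h x hx0
      have h2 := key x hx0
      rw [hF x hx0, hs'] at h1
      rw [hs'] at h2
      rw [h1, hF (c*x) (by positivity), ← h2]
  · intro h x hx
    have hxα : 0 < x ^ (-α) := Real.rpow_pos_of_pos hx _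
    have hu1 : (1:ℝ) < 1 + x ^ (-α) := by linarith
    have hFx : F x ∈ Set.Icc (0:ℝ) 1 := by
      rw [hF x hx]
      constructor
      · exact (Real.rpow_pos_of_pos (by linarith) _).le
      · exact Real.rpow_le_one_of_one_le_of_nonpos hu1.le (neg_nonpos.mpr (by positivity))
    have h1 := h (F x) hFx
    rw [hF (c*x) (by positivity), ← key x hx, ← hF x hx]
    exact h1
end

section
/- For every a > 1 and every positive integer k, the Harris(a,k) function Q(s) = s / (a - (a-1)s^k)^{1/k} is a genuine PGF: there exists p : ℕ → ℝ with p n ≥ 0 for all n, p 0 = 0, ∑_n p n = 1, and s / (a - (a-1)s^k)^{1/k} = ∑_n p n · s^n for all s ∈ [0,1]. -/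
noncomputable def harrisAuxC (r : ℝ) : ℕ → ℝ
  | 0 => 1
  | n + 1 => harrisAuxC r n * (r + n) / (n + 1)

lemma harrisAuxC_nonneg {r : ℝ} (hr : 0 ≤ r) : ∀ n, 0 ≤ harrisAuxC r n
  | 0 => zero_le_one
  | n + 1 => by
      have h := harrisAuxC_nonneg hr n
      unfold harrisAuxC
      positivity

lemma harrisAuxC_le_one {r : ℝ} (hr : 0 ≤ r) (hr1 : r ≤ 1) : ∀ n, harrisAuxC r n ≤ 1
  | 0 => le_refl 1
  | n + 1 => by
      have h := harrisAuxC_le_one hr hr1 n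
      have h0 := harrisAuxC_nonneg hr n
      show harrisAuxC r n * (r + n) / (n + 1) ≤ 1
      rw [div_le_one (by positivity)]
      calc harrisAuxC r n * (r + n) ≤ 1 * (r + n) := by
            apply mul_le_mul_of_nonneg_right h (by positivity)
        _ = r + n := one_mul _
        _ ≤ n + 1 := by linarith

lemma harrisAuxC_rec (r : ℝ) (n : ℕ) :
    ((n : ℝ) + 1) * harrisAuxC r (n + 1) = (r + n) * harrisAuxC r n := by
  show ((n : ℝ) + 1) * (harrisAuxC r n * (r + n) / (n + 1)) = _
  field_simp

lemma harrisAuxC_summable {r : ℝ} (hr : 0 ≤ r) (hr1 : r ≤ 1) {x : ℝ} (hx : |x| < 1) :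
    Summable fun n => harrisAuxC r n * x ^ n := by
  apply Summable.of_norm_bounded (summable_geometric_of_lt_one (abs_nonneg x) hx)
  intro n
  rw [norm_mul, norm_pow, Real.norm_eq_abs, Real.norm_eq_abs,
    abs_of_nonneg (harrisAuxC_nonneg hr n)]
  exact mul_le_of_le_one_left (by positivity) (harrisAuxC_le_one hr hr1 n)

lemma summable_n_rho {ρ : ℝ} (h0 : 0 ≤ ρ) (h1 : ρ < 1) :
    Summable (fun n : ℕ => (n : ℝ) * ρ ^ (n - 1)) := by
  rw [← summable_nat_add_iff 1]
  have h2 : Summable (fun n : ℕ => (n : ℝ) * ρ ^ n) := by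
    have := summable_pow_mul_geometric_of_norm_lt_one (R := ℝ) 1
      (r := ρ) (by rwa [Real.norm_eq_abs, abs_of_nonneg h0])
    simpa using this
  have h3 : Summable (fun n : ℕ => ρ ^ n) := summable_geometric_of_lt_one h0 h1
  have := h2.add h3
  apply this.congr
  intro n
  push_cast
  ring

lemma harris_deriv_summable {r : ℝ} (hr : 0 ≤ r) (hr1 : r ≤ 1) {y ρ : ℝ} (hyρ : |y| ≤ ρ)
    (hρ : ρ < 1) : Summable fun n : ℕ => harrisAuxC r n * ((n : ℝ) * y ^ (n - 1)) := by
  have h0 : 0 ≤ ρ := le_trans (abs_nonneg y) hyρ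
  apply Summable.of_norm_bounded (summable_n_rho h0 hρ)
  intro n
  rw [norm_mul, norm_mul, Real.norm_eq_abs, Real.norm_eq_abs, Real.norm_eq_abs,
    abs_of_nonneg (harrisAuxC_nonneg hr n), Nat.abs_cast, abs_pow]
  calc harrisAuxC r n * ((n : ℝ) * |y| ^ (n - 1))
      ≤ 1 * ((n : ℝ) * ρ ^ (n - 1)) := by
        apply mul_le_mul (harrisAuxC_le_one hr hr1 n)
          (mul_le_mul_of_nonneg_left (pow_le_pow_left₀ (abs_nonneg y) hyρ _) (Nat.cast_nonneg n))
          (by positivity) zero_le_one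
    _ = (n : ℝ) * ρ ^ (n - 1) := one_mul _

lemma harris_ode {r : ℝ} (hr0 : 0 < r) (hr1 : r ≤ 1) {y : ℝ} (hy : |y| < 1) :
    (1 - y) * (∑' n : ℕ, harrisAuxC r n * ((n : ℝ) * y ^ (n - 1)))
      = r * ∑' n : ℕ, harrisAuxC r n * y ^ n := by
  set c := harrisAuxC r with hc
  have S1 : Summable fun n : ℕ => c n * y ^ n := harrisAuxC_summable hr0.le hr1 hy
  have S2 : Summable fun n : ℕ => c n * ((n : ℝ) * y ^ (n - 1)) :=
    harris_deriv_summable hr0.le hr1 (le_refl |y|) hy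
  have hB : (fun n : ℕ => (n : ℝ) * c n * y ^ n)
      = fun n : ℕ => y * (c n * ((n : ℝ) * y ^ (n - 1))) := by
    funext n
    cases n with
    | zero => simp
    | succ m => simp only [Nat.add_sub_cancel]; push_cast; ring
  have SB : Summable fun n : ℕ => (n : ℝ) * c n * y ^ n := by
    rw [hB]; exact S2.mul_left y
  have SA : Summable fun n : ℕ => (r + (n : ℝ)) * c n * y ^ n := by
    have := (S1.mul_left r).add SB
    apply this.congr
    intro n; ring
  have hT : (∑' n : ℕ, c n * ((n : ℝ) * y ^ (n - 1)))
      = ∑' n : ℕ, (r + (n : ℝ)) * c n * y ^ n := by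
    rw [Summable.tsum_eq_zero_add S2]
    simp only [Nat.cast_zero, zero_mul, mul_zero, zero_add, Nat.add_sub_cancel]
    apply tsum_congr
    intro n
    have hrec := harrisAuxC_rec r n
    push_cast at hrec ⊢
    calc c (n + 1) * (((n : ℝ) + 1) * y ^ n) = (((n : ℝ) + 1) * c (n + 1)) * y ^ n := by ring
      _ = (r + n) * c n * y ^ n := by rw [hrec]
  have hY : y * (∑' n : ℕ, c n * ((n : ℝ) * y ^ (n - 1)))
      = ∑' n : ℕ, (n : ℝ) * c n * y ^ n := by
    rw [← tsum_mul_left, hB]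
  have hsub : (∑' n : ℕ, (r + (n : ℝ)) * c n * y ^ n) - (∑' n : ℕ, (n : ℝ) * c n * y ^ n)
      = r * ∑' n : ℕ, c n * y ^ n := by
    rw [← Summable.tsum_sub SA SB, ← tsum_mul_left]
    apply tsum_congr
    intro n; ring
  calc (1 - y) * (∑' n : ℕ, c n * ((n : ℝ) * y ^ (n - 1)))
      = (∑' n : ℕ, c n * ((n : ℝ) * y ^ (n - 1)))
        - y * (∑' n : ℕ, c n * ((n : ℝ) * y ^ (n - 1))) := by ring
    _ = (∑' n : ℕ, (r + (n : ℝ)) * c n * y ^ n) - (∑' n : ℕ, (n : ℝ) * c n * y ^ n) := by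
        rw [hY, hT]
    _ = r * ∑' n : ℕ, c n * y ^ n := hsub

lemma harris_binomial {r : ℝ} (hr0 : 0 < r) (hr1 : r ≤ 1) {x : ℝ} (hx : |x| < 1) :
    HasSum (fun n => harrisAuxC r n * x ^ n) ((1 - x) ^ (-r : ℝ)) := by
  set c := harrisAuxC r with hc
  -- derivative of the sum
  have hderiv : ∀ y ∈ Set.Ioo (-1 : ℝ) 1,
      HasDerivAt (fun z : ℝ => ∑' n : ℕ, c n * z ^ n)
        (∑' n : ℕ, c n * ((n : ℝ) * y ^ (n - 1))) y := by
    intro y hy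
    have hy1 : |y| < 1 := abs_lt.2 ⟨hy.1, hy.2⟩
    set ρ : ℝ := (|y| + 1) / 2 with hρ
    have hyρ : |y| < ρ := by rw [hρ]; linarith
    have hρ1 : ρ < 1 := by rw [hρ]; linarith
    have hρ0 : 0 ≤ ρ := le_trans (abs_nonneg y) hyρ.le
    have hg : ∀ (n : ℕ) (z : ℝ), z ∈ Set.Ioo (-ρ) ρ →
        HasDerivAt (fun w : ℝ => c n * w ^ n) (c n * ((n : ℝ) * z ^ (n - 1))) z :=
      fun n z _ => (hasDerivAt_pow n z).const_mul (c n)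
    have hg' : ∀ (n : ℕ) (z : ℝ), z ∈ Set.Ioo (-ρ) ρ →
        ‖c n * ((n : ℝ) * z ^ (n - 1))‖ ≤ (n : ℝ) * ρ ^ (n - 1) := by
      intro n z hz
      have hzρ : |z| ≤ ρ := (abs_lt.2 ⟨hz.1, hz.2⟩).le
      rw [Real.norm_eq_abs, abs_mul, abs_mul, abs_of_nonneg (harrisAuxC_nonneg hr0.le n),
        Nat.abs_cast, abs_pow]
      calc c n * ((n : ℝ) * |z| ^ (n - 1))
          ≤ 1 * ((n : ℝ) * ρ ^ (n - 1)) := by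
            apply mul_le_mul (harrisAuxC_le_one hr0.le hr1 n)
              (mul_le_mul_of_nonneg_left (pow_le_pow_left₀ (abs_nonneg z) hzρ _)
                (Nat.cast_nonneg n)) (by positivity) zero_le_one
        _ = (n : ℝ) * ρ ^ (n - 1) := one_mul _
    have hρpos : 0 < ρ := by rw [hρ]; positivity
    have h0m : (0 : ℝ) ∈ Set.Ioo (-ρ) ρ := Set.mem_Ioo.2 ⟨by linarith, hρpos⟩
    have hs0 : Summable fun n : ℕ => c n * (0 : ℝ) ^ n :=
      harrisAuxC_summable hr0.le hr1 (by norm_num)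
    have hym : y ∈ Set.Ioo (-ρ) ρ := ⟨neg_lt_of_abs_lt hyρ, lt_of_abs_lt hyρ⟩
    exact hasDerivAt_tsum_of_isPreconnected (summable_n_rho hρ0 hρ1) isOpen_Ioo
      (convex_Ioo _ _).isPreconnected hg hg' h0m hs0 hym
  -- F = f * (1-z)^r has zero derivative
  have hFderiv : ∀ y ∈ Set.Ioo (-1 : ℝ) 1,
      HasDerivAt (fun z : ℝ => (∑' n : ℕ, c n * z ^ n) * (1 - z) ^ (r : ℝ)) 0 y := by
    intro y hy
    have hy1 : |y| < 1 := abs_lt.2 ⟨hy.1, hy.2⟩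
    have h1y : (0 : ℝ) < 1 - y := by linarith [hy.2]
    have hrpow : HasDerivAt (fun z : ℝ => (1 - z) ^ (r : ℝ))
        (r * (1 - y) ^ (r - 1 : ℝ) * (-1)) y := by
      have houter := Real.hasDerivAt_rpow_const (x := 1 - y) (p := r) (Or.inl (ne_of_gt h1y))
      have hinner : HasDerivAt (fun z : ℝ => 1 - z) (-1) y := by
        simpa using (hasDerivAt_id y).const_sub 1
      exact houter.comp y hinner
    have hmul := (hderiv y hy).mul hrpow
    have hode := harris_ode hr0 hr1 hy1
    have hpow : (1 - y) ^ (r : ℝ) = (1 - y) ^ (r - 1 : ℝ) * (1 - y) := by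
      rw [← Real.rpow_add_one (ne_of_gt h1y) (r - 1), sub_add_cancel]
    refine hmul.congr_deriv (Eq.symm ?_)
    rw [hpow]
    linear_combination (-(1 - y) ^ (r - 1 : ℝ)) * hode
  have hx1 : x ∈ Set.Ioo (-1 : ℝ) 1 := ⟨neg_lt_of_abs_lt hx, lt_of_abs_lt hx⟩
  have h0mem : (0 : ℝ) ∈ Set.Ioo (-1 : ℝ) 1 := by norm_num
  have hconst : (∑' n : ℕ, c n * x ^ n) * (1 - x) ^ (r : ℝ)
      = (∑' n : ℕ, c n * (0:ℝ) ^ n) * (1 - 0) ^ (r : ℝ) := by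
    apply (convex_Ioo (-1 : ℝ) 1).is_const_of_fderivWithin_eq_zero
      (fun y hy => (hFderiv y hy).differentiableAt.differentiableWithinAt) _ hx1 h0mem
    intro y hy
    rw [fderivWithin_of_isOpen isOpen_Ioo hy, (hFderiv y hy).hasFDerivAt.fderiv]
    ext
    simp
  have hzero : (∑' n : ℕ, c n * (0:ℝ) ^ n) = 1 := by
    rw [tsum_eq_single 0 (fun n hn => by simp [zero_pow hn])]
    simp [hc, harrisAuxC]
  have h1x : (0 : ℝ) < 1 - x := by linarith [hx1.2]
  have hmul1 : (∑' n : ℕ, c n * x ^ n) * (1 - x) ^ (r : ℝ) = 1 := by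
    rw [hconst, hzero]
    norm_num
  have hne : (1 - x) ^ (r : ℝ) ≠ 0 := ne_of_gt (Real.rpow_pos_of_pos h1x r)
  have hfx : (∑' n : ℕ, c n * x ^ n) = (1 - x) ^ (-r : ℝ) := by
    rw [Real.rpow_neg h1x.le, ← one_div]
    exact eq_div_of_mul_eq hne hmul1
  have hsum := (harrisAuxC_summable hr0.le hr1 hx).hasSum
  rw [show (∑' n : ℕ, harrisAuxC r n * x ^ n) = (1 - x) ^ (-r : ℝ) from hfx] at hsum
  exact hsum

/-- For a > 1 and k a positive integer, the Harris(a,k) function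
Q(s) = s / (a - (a-1)s^k)^{1/k} is a genuine PGF. -/
theorem harris_isPGF (a : ℝ) (ha : 1 < a) (k : ℕ) (hk : 0 < k) :
    ∃ p : ℕ → ℝ, (∀ n, 0 ≤ p n) ∧ p 0 = 0 ∧ (∑' n, p n) = 1 ∧
      ∀ s ∈ Set.Icc (0:ℝ) 1,
        s / (a - (a - 1) * s ^ k) ^ ((1:ℝ) / k) = ∑' n, p n * s ^ n := by
  have hk0 : (0 : ℝ) < k := Nat.cast_pos.2 hk
  have hk1 : (1 : ℝ) ≤ k := Nat.one_le_cast.2 hk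
  set r : ℝ := (1 : ℝ) / k with hrdef
  have hr0 : 0 < r := by rw [hrdef]; positivity
  have hr1 : r ≤ 1 := by rw [hrdef, div_le_one hk0]; exact hk1
  have ha0 : (0 : ℝ) < a := lt_trans one_pos ha
  set b : ℝ := (a - 1) / a with hbdef
  have hb0 : 0 ≤ b := div_nonneg (by linarith) ha0.le
  have hb1 : b < 1 := by rw [hbdef, div_lt_one ha0]; linarith
  set q : ℕ → ℝ := fun n => a ^ (-r : ℝ) * harrisAuxC r n * b ^ n with hqdef
  have hq0 : ∀ n, 0 ≤ q n := by
    intro n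
    have h1 := Real.rpow_nonneg ha0.le (-r)
    have h2 := harrisAuxC_nonneg hr0.le n
    positivity
  set e : ℕ → ℕ := fun n => n * k + 1 with hedef
  have hinj : Function.Injective e := by
    intro m n h
    simp only [hedef] at h
    exact Nat.eq_of_mul_eq_mul_right hk (Nat.succ_injective h)
  set p : ℕ → ℝ := Function.extend e q 0 with hpdef
  have hp_apply : ∀ n, p (e n) = q n := fun n => by rw [hpdef, hinj.extend_apply]
  have hp_zero : ∀ m, (¬ ∃ n, e n = m) → p m = 0 := by
    intro m hm
    rw [hpdef, Function.extend_apply' q ((0 : ℕ → ℝ)) m hm]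
    rfl
  have hp_nonneg : ∀ m, 0 ≤ p m := by
    intro m
    by_cases hm : ∃ n, e n = m
    · obtain ⟨n, rfl⟩ := hm
      rw [hp_apply]; exact hq0 n
    · rw [hp_zero m hm]
  have hp0 : p 0 = 0 := by
    apply hp_zero
    rintro ⟨n, hn⟩
    simp [hedef] at hn
  have key : ∀ s ∈ Set.Icc (0:ℝ) 1,
      s / (a - (a - 1) * s ^ k) ^ ((1:ℝ) / k) = ∑' n, p n * s ^ n := by
    rintro s ⟨hs0, hs1⟩
    set x : ℝ := b * s ^ k with hxdef
    have hx0 : 0 ≤ x := by rw [hxdef]; positivity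
    have hxb : x ≤ b := by
      rw [hxdef]
      calc b * s ^ k ≤ b * 1 := by
            exact mul_le_mul_of_nonneg_left (pow_le_one₀ hs0 hs1) hb0
        _ = b := mul_one b
    have hx1 : x < 1 := lt_of_le_of_lt hxb hb1
    have hxabs : |x| < 1 := by rw [abs_of_nonneg hx0]; exact hx1
    have h1x : (0:ℝ) < 1 - x := by linarith
    have hbin := harris_binomial hr0 hr1 hxabs
    have hfac : a - (a - 1) * s ^ k = a * (1 - x) := by
      rw [hxdef, hbdef]
      field_simp
    have hpow : (a - (a - 1) * s ^ k) ^ ((1:ℝ) / k) = a ^ (r:ℝ) * (1 - x) ^ (r:ℝ) := by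
      rw [hfac, ← hrdef, Real.mul_rpow ha0.le h1x.le]
    have hlhs : s / (a - (a - 1) * s ^ k) ^ ((1:ℝ) / k)
        = s * a ^ (-r : ℝ) * (1 - x) ^ (-r : ℝ) := by
      rw [hpow, Real.rpow_neg ha0.le, Real.rpow_neg h1x.le, div_eq_mul_inv, mul_inv]
      ring
    have h2 := hbin.mul_left (s * a ^ (-r : ℝ))
    have hterm : (fun n => s * a ^ (-r : ℝ) * (harrisAuxC r n * x ^ n))
        = fun n => p (e n) * s ^ (e n) := by
      funext n
      rw [hp_apply, hqdef, hedef, hxdef]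
      simp only
      rw [mul_pow, pow_succ, mul_comm n k, pow_mul]
      ring
    rw [hterm] at h2
    have hzero : ∀ m ∉ Set.range e, p m * s ^ m = 0 := by
      intro m hm
      rw [hp_zero m (by simpa [Set.mem_range] using hm), zero_mul]
    have h4 : HasSum (fun m => p m * s ^ m) (s * a ^ (-r:ℝ) * (1 - x) ^ (-r:ℝ)) :=
      (hinj.hasSum_iff hzero).1 h2
    rw [hlhs, h4.tsum_eq]
  have htsum : (∑' n, p n) = 1 := by
    have h1 := key 1 ⟨zero_le_one, le_refl 1⟩
    rw [one_pow, mul_one] at h1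
    have : a - (a - 1) = 1 := by ring
    rw [this, Real.one_rpow, div_one] at h1
    calc (∑' n, p n) = ∑' n, p n * 1 ^ n := tsum_congr fun n => by rw [one_pow, mul_one]
      _ = 1 := h1.symm
  exact ⟨p, hp_nonneg, hp0, htsum, key⟩
end
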